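/- Let (B_n) be a sequence of events such that ∑ P(B_n) = ∞ and there is a constant c ∈ (0,1] with P(B_n ∩ B_m) ≤ P(B_n)P(B_m)/c² for all n ≠ m. Then P(limsup_n B_n) ≥ c². -/

import Mathlib

/-!
Chung–Erdős inequality: for the counting function `∑ 1_{B k}` of a finite block of events,
Cauchy–Schwarz on the union of the block gives
`μ (⋃ B k) ≥ (∑ μ (B k))² / ∑ μ (B j ∩ B k)`.
Under the correlation bound the denominator is at most `S + S² / c²`, where `S = ∑ μ (B k)`,
so every tail union has measure at least `1 / (1 / S + 1 / c²)`. Along the blocks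
`[N, M)` the sum `S` tends to `∞` as `M → ∞`, hence each tail union has measure at least `c²`,
and the tail unions decrease to `limsup B`.
-/

open MeasureTheory Filter Set
open scoped ENNReal Topology

theorem ENNReal.le_of_sq_le_add_sq_div_mul {ι : Type*} {l : Filter ι} [l.NeBot]
    {S : ι → ℝ≥0∞} {γ p : ℝ≥0∞} (hS : Tendsto S l (𝓝 ∞)) (hS_ne_top : ∀ i, S i ≠ ∞)
    (h : ∀ i, S i ^ 2 ≤ (S i + S i ^ 2 / γ) * p) : γ ≤ p := by
  rcases eq_or_ne γ 0 with rfl | hγ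
  · exact zero_le
  rcases eq_or_ne p ∞ with rfl | hp
  · exact le_top
  have hbound : ∀ᶠ i in l, 1 ≤ ((S i)⁻¹ + γ⁻¹) * p := by
    filter_upwards [hS.eventually_ne ENNReal.top_ne_zero] with i hi
    have hfactor : S i + S i ^ 2 / γ = S i ^ 2 * ((S i)⁻¹ + γ⁻¹) := by
      rw [mul_add, sq, mul_assoc, ENNReal.mul_inv_cancel hi (hS_ne_top i), mul_one,
        div_eq_mul_inv]
    rw [← ENNReal.mul_le_mul_iff_right (pow_ne_zero 2 hi) (ENNReal.pow_ne_top (hS_ne_top i)),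
      mul_one, ← mul_assoc, ← hfactor]
    exact h i
  have hlim : Tendsto (fun i => ((S i)⁻¹ + γ⁻¹) * p) l (𝓝 (γ⁻¹ * p)) := by
    simpa using ENNReal.Tendsto.mul_const ((tendsto_inv_iff.2 hS).add_const γ⁻¹) (.inr hp)
  have := ge_of_tendsto hlim hbound
  rwa [mul_comm, ← div_eq_mul_inv, ENNReal.le_div_iff_mul_le (.inl hγ) (.inr hp), one_mul] at this

theorem ENNReal.tendsto_sum_Ico_atTop_of_tsum_eq_top {f : ℕ → ℝ≥0∞} (hf : ∀ n, f n ≠ ∞)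
    (h : ∑' n, f n = ∞) (N : ℕ) :
    Tendsto (fun M => ∑ k ∈ Finset.Ico N M, f k) atTop (𝓝 ∞) := by
  have hhead : ∑ k ∈ Finset.range N, f k ≠ ∞ := ENNReal.sum_ne_top.2 fun k _ => hf k
  have hpartial : Tendsto (fun M => ∑ k ∈ Finset.range M, f k) atTop (𝓝 ∞) :=
    h ▸ ENNReal.tendsto_nat_tsum f
  have htail := ENNReal.Tendsto.sub hpartial tendsto_const_nhds (.inr hhead)
  rw [ENNReal.top_sub hhead] at htail
  refine tendsto_nhds_top_mono htail ?_
  filter_upwards [eventually_ge_atTop N] with M hNM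
  exact tsub_le_iff_left.2 (Finset.sum_range_add_sum_Ico f hNM).ge

namespace MeasureTheory

variable {α : Type*} [MeasurableSpace α] {μ : Measure α}

theorem sq_lintegral_le_measure_mul_lintegral_sq {f : α → ℝ≥0∞} {s : Set α}
    (hf : AEMeasurable f μ) (hfs : f.support ⊆ s) :
    (∫⁻ a, f a ∂μ) ^ 2 ≤ μ s * ∫⁻ a, f a ^ 2 ∂μ := by
  have holder := ENNReal.lintegral_mul_le_Lp_mul_Lq (μ.restrict s) .two_two
    aemeasurable_const hf.restrict (f := 1)
  simp only [Pi.one_apply, one_pow, one_mul, lintegral_const, Measure.restrict_apply_univ,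
    ENNReal.rpow_two] at holder
  rw [setLIntegral_eq_of_support_subset hfs] at holder
  calc (∫⁻ a, f a ∂μ) ^ 2
      ≤ ((μ s) ^ (1 / 2 : ℝ) * (∫⁻ a in s, f a ^ 2 ∂μ) ^ (1 / 2 : ℝ)) ^ 2 := by gcongr
    _ = μ s * ∫⁻ a in s, f a ^ 2 ∂μ := by
      rw [mul_pow, ← ENNReal.rpow_natCast, ← ENNReal.rpow_natCast (_ ^ _), ← ENNReal.rpow_mul,
        ← ENNReal.rpow_mul]
      norm_num
    _ ≤ μ s * ∫⁻ a, f a ^ 2 ∂μ := by gcongr; exact Measure.restrict_le_self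

section Finite

variable {ι : Type*} {B : ι → Set α}

theorem lintegral_sum_indicator_one (hB : ∀ i, MeasurableSet (B i)) (s : Finset ι) :
    ∫⁻ a, ∑ i ∈ s, (B i).indicator 1 a ∂μ = ∑ i ∈ s, μ (B i) := by
  rw [lintegral_finsetSum _ fun i _ => measurable_one.indicator (hB i)]
  simp only [lintegral_indicator_one (hB _)]

theorem lintegral_sum_indicator_one_sq (hB : ∀ i, MeasurableSet (B i)) (s : Finset ι) :
    ∫⁻ a, (∑ i ∈ s, (B i).indicator 1 a) ^ 2 ∂μ = ∑ i ∈ s, ∑ j ∈ s, μ (B i ∩ B j) := by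
  have hprod (i j : ι) (a : α) :
      (B i).indicator (1 : α → ℝ≥0∞) a * (B j).indicator 1 a = (B i ∩ B j).indicator 1 a := by
    rw [inter_indicator_one]; rfl
  simp_rw [sq, Finset.sum_mul_sum, hprod]
  rw [lintegral_finsetSum _ fun i _ =>
    Finset.measurable_sum s fun j _ => measurable_one.indicator ((hB i).inter (hB j))]
  simp_rw [lintegral_sum_indicator_one fun j => (hB _).inter (hB j)]

theorem sq_sum_measure_le_sum_measure_inter_mul_measure_biUnion
    (hB : ∀ i, MeasurableSet (B i)) (s : Finset ι) :
    (∑ i ∈ s, μ (B i)) ^ 2 ≤ (∑ i ∈ s, ∑ j ∈ s, μ (B i ∩ B j)) * μ (⋃ i ∈ s, B i) := by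
  have hsupp :
      (fun a => ∑ i ∈ s, (B i).indicator (1 : α → ℝ≥0∞) a).support ⊆ ⋃ i ∈ s, B i := by
    intro a ha
    obtain ⟨i, hi, hai⟩ := Finset.exists_ne_zero_of_sum_ne_zero ha
    exact mem_biUnion hi (support_indicator_subset hai)
  have := sq_lintegral_le_measure_mul_lintegral_sq (μ := μ)
    (Finset.measurable_sum s fun i _ => measurable_one.indicator (hB i)).aemeasurable hsupp
  rwa [lintegral_sum_indicator_one hB, lintegral_sum_indicator_one_sq hB, mul_comm] at this

theorem sum_sum_measure_inter_le [DecidableEq ι] {γ : ℝ≥0∞} {s : Finset ι}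
    (hB : ∀ i ∈ s, ∀ j ∈ s, i ≠ j → μ (B i ∩ B j) ≤ μ (B i) * μ (B j) / γ) :
    ∑ i ∈ s, ∑ j ∈ s, μ (B i ∩ B j) ≤ ∑ i ∈ s, μ (B i) + (∑ i ∈ s, μ (B i)) ^ 2 / γ := by
  have hterm : ∀ i ∈ s, ∀ j ∈ s, μ (B i ∩ B j) ≤
      (if i = j then μ (B i) else 0) + μ (B i) * μ (B j) / γ := by
    intro i hi j hj
    by_cases hij : i = j
    · simp [hij]
    · simpa [hij] using hB i hi j hj hij
  calc ∑ i ∈ s, ∑ j ∈ s, μ (B i ∩ B j)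
      ≤ ∑ i ∈ s, ∑ j ∈ s, ((if i = j then μ (B i) else 0) + μ (B i) * μ (B j) / γ) :=
        Finset.sum_le_sum fun i hi => Finset.sum_le_sum fun j hj => hterm i hi j hj
    _ = ∑ i ∈ s, μ (B i) + (∑ i ∈ s, μ (B i)) ^ 2 / γ := by
        simp only [Finset.sum_add_distrib, Finset.sum_ite_eq, Finset.sum_ite_mem,
          Finset.inter_self, div_eq_mul_inv, ← Finset.sum_mul, sq, Finset.sum_mul_sum]

end Finite

variable [IsFiniteMeasure μ] {B : ℕ → Set α} {γ : ℝ≥0∞}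

theorem le_measure_iUnion_ge_of_measure_inter_le (hB : ∀ n, MeasurableSet (B n))
    (hdiv : ∑' n, μ (B n) = ∞)
    (hcorr : ∀ n m, n ≠ m → μ (B n ∩ B m) ≤ μ (B n) * μ (B m) / γ) (N : ℕ) :
    γ ≤ μ (⋃ n ≥ N, B n) := by
  have hblock (M : ℕ) : ⋃ n ∈ Finset.Ico N M, B n ⊆ ⋃ n ≥ N, B n :=
    iUnion₂_subset fun n hn =>
      subset_iUnion₂ (s := fun n (_ : n ≥ N) => B n) n (Finset.mem_Ico.1 hn).1
  refine ENNReal.le_of_sq_le_add_sq_div_mul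
    (ENNReal.tendsto_sum_Ico_atTop_of_tsum_eq_top (fun n => measure_ne_top μ (B n)) hdiv N)
    (fun M => ENNReal.sum_ne_top.2 fun n _ => measure_ne_top μ (B n)) fun M => ?_
  calc (∑ n ∈ Finset.Ico N M, μ (B n)) ^ 2
      ≤ (∑ n ∈ Finset.Ico N M, ∑ m ∈ Finset.Ico N M, μ (B n ∩ B m)) *
          μ (⋃ n ∈ Finset.Ico N M, B n) :=
        sq_sum_measure_le_sum_measure_inter_mul_measure_biUnion hB _
    _ ≤ _ := mul_le_mul' (sum_sum_measure_inter_le fun n _ m _ hnm => hcorr n m hnm)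
        (measure_mono (hblock M))

theorem le_measure_limsup_atTop_of_measure_inter_le (hB : ∀ n, MeasurableSet (B n))
    (hdiv : ∑' n, μ (B n) = ∞)
    (hcorr : ∀ n m, n ≠ m → μ (B n ∩ B m) ≤ μ (B n) * μ (B m) / γ) :
    γ ≤ μ (limsup B atTop) := by
  have hanti : Antitone fun N => ⋃ n ≥ N, B n :=
    fun _ _ hNM => iUnion₂_mono' fun n hn => ⟨n, hNM.trans hn, le_rfl⟩
  simp only [limsup_eq_iInf_iSup_of_nat, iInf_eq_iInter, iSup_eq_iUnion]
  rw [hanti.measure_iInter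
    (fun N => (MeasurableSet.biUnion (to_countable _) fun n _ => hB n).nullMeasurableSet)
    ⟨0, measure_ne_top μ _⟩]
  exact le_iInf (le_measure_iUnion_ge_of_measure_inter_le hB hdiv hcorr)

end MeasureTheory

theorem borel_cantelli_extension_general
    {Ω : Type*} [MeasurableSpace Ω] (μ : Measure Ω) [IsProbabilityMeasure μ]
    (B : ℕ → Set Ω) (hBmeas : ∀ n, MeasurableSet (B n))
    (c : ℝ)
    (hdiv : ∑' n, μ (B n) = ⊤)
    (hcorr : ∀ n m, n ≠ m →
      μ (B n ∩ B m) ≤ μ (B n) * μ (B m) / ENNReal.ofReal (c ^ 2)) :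
    ENNReal.ofReal (c ^ 2) ≤ μ (Filter.limsup B Filter.atTop) :=
  le_measure_limsup_atTop_of_measure_inter_le hBmeas hdiv hcorr

/-- Extension of the Borel–Cantelli lemma: if `∑ P(B n) = ∞` and
`P(B n ∩ B m) ≤ P(B n) P(B m) / c²` for all `n ≠ m`, with `c ∈ (0,1]`,
then `P(limsup B n) ≥ c²`. -/
theorem borel_cantelli_extension
    {Ω : Type*} [MeasurableSpace Ω] (μ : Measure Ω) [IsProbabilityMeasure μ]
    (B : ℕ → Set Ω) (hBmeas : ∀ n, MeasurableSet (B n))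
    (c : ℝ) (hc0 : 0 < c) (hc1 : c ≤ 1)
    (hdiv : ∑' n, μ (B n) = ⊤)
    (hcorr : ∀ n m, n ≠ m →
      μ (B n ∩ B m) ≤ μ (B n) * μ (B m) / ENNReal.ofReal (c ^ 2)) :
    ENNReal.ofReal (c ^ 2) ≤ μ (Filter.limsup B Filter.atTop) :=
  borel_cantelli_extension_general μ B hBmeas c hdiv hcorr
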